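/- For 0 < a < b, the integral of ln(x)/(x·sqrt((b-x)(x-a))) over [a,b] equals (2π/√(ab))·ln(2√(ab)/(√a+√b)). -/

import Mathlib

/-!
The substitution `x ↦ a b / x` turns the integral into
`(a b)^(-1/2) ∫_a^b log (a b / x) dx / √((b - x)(x - a))`, and `x = (a + b)/2 - (b - a)/2 · cos θ`
turns `dx / √((b - x)(x - a))` into `dθ` on `[0, π]`. What remains is `∫_0^π log (p + q cos θ) dθ`;
writing `p + q cos θ = s |e^{iθ} - k|²` with `|k| < 1`, this reduces to the vanishing of the mean
of `log |z - k|` over the unit circle.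
-/

open Real MeasureTheory Set

lemma one_sub_two_mul_cos_add_sq_pos {k : ℝ} (hk : |k| < 1) (θ : ℝ) :
    0 < 1 - 2 * k * cos θ + k ^ 2 := by
  have : k * cos θ ≤ |k| := by
    calc k * cos θ ≤ |k * cos θ| := le_abs_self _
      _ = |k| * |cos θ| := abs_mul _ _
      _ ≤ |k| := mul_le_of_le_one_right (abs_nonneg k) (abs_cos_le_one θ)
  nlinarith [sq_abs k, abs_nonneg k]

lemma norm_circleMap_zero_one_sub_sq (k θ : ℝ) :
    ‖circleMap 0 1 θ - k‖ ^ 2 = 1 - 2 * k * cos θ + k ^ 2 := by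
  rw [Complex.sq_norm, Complex.normSq_apply]
  simp [circleMap, Complex.exp_mul_I, ← Complex.ofReal_cos, ← Complex.ofReal_sin]
  nlinarith [sin_sq_add_cos_sq θ]

lemma integral_log_one_sub_two_mul_cos_add_sq_zero_two_pi {k : ℝ} (hk : |k| < 1) :
    ∫ θ in 0..2 * π, log (1 - 2 * k * cos θ + k ^ 2) = 0 := by
  have hnorm : ‖(k : ℂ)‖ < 1 := by rwa [Complex.norm_real, Real.norm_eq_abs]
  have havg := circleAverage_log_norm_sub_const₀ hnorm
  rw [circleAverage_def, smul_eq_mul, mul_eq_zero] at havg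
  simp_rw [← norm_circleMap_zero_one_sub_sq, log_pow, intervalIntegral.integral_const_mul]
  simp [havg.resolve_left (by positivity)]

lemma integral_comp_cos_zero_two_pi (f : ℝ → ℝ)
    (hf : IntervalIntegrable (fun θ => f (cos θ)) volume 0 π) :
    ∫ θ in 0..2 * π, f (cos θ) = 2 * ∫ θ in 0..π, f (cos θ) := by
  have hreflect : ∫ θ in π..2 * π, f (cos θ) = ∫ θ in 0..π, f (cos θ) := by
    simpa [cos_sub, two_mul] using
      (intervalIntegral.integral_comp_sub_left (fun θ => f (cos θ)) (2 * π)
        (a := 0) (b := π)).symm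
  have hf' : IntervalIntegrable (fun θ => f (cos θ)) volume π (2 * π) := by
    simpa [cos_sub, two_mul] using (hf.comp_sub_left (2 * π)).symm
  rw [← intervalIntegral.integral_add_adjacent_intervals hf hf', hreflect, two_mul]

lemma continuous_log_one_sub_two_mul_cos_add_sq {k : ℝ} (hk : |k| < 1) :
    Continuous fun θ => log (1 - 2 * k * cos θ + k ^ 2) :=
  (by fun_prop : Continuous fun θ => 1 - 2 * k * cos θ + k ^ 2).log
    fun θ => (one_sub_two_mul_cos_add_sq_pos hk θ).ne'

lemma integral_log_one_sub_two_mul_cos_add_sq {k : ℝ} (hk : |k| < 1) :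
    ∫ θ in 0..π, log (1 - 2 * k * cos θ + k ^ 2) = 0 := by
  have h := integral_comp_cos_zero_two_pi (fun c => log (1 - 2 * k * c + k ^ 2))
    ((continuous_log_one_sub_two_mul_cos_add_sq hk).intervalIntegrable _ _)
  rw [integral_log_one_sub_two_mul_cos_add_sq_zero_two_pi hk] at h
  linarith

lemma integral_log_add_mul_cos {p q : ℝ} (hq : |q| < p) :
    ∫ θ in 0..π, log (p + q * cos θ) = π * log ((p + √(p ^ 2 - q ^ 2)) / 2) := by
  set s := (p + √(p ^ 2 - q ^ 2)) / 2
  have hσ : √(p ^ 2 - q ^ 2) ^ 2 = p ^ 2 - q ^ 2 :=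
    sq_sqrt (by nlinarith [sq_abs q, abs_nonneg q])
  have hp : 0 < p := (abs_nonneg q).trans_lt hq
  have hs : 0 < s := by positivity
  set k := -q / (2 * s)
  have hk : |k| < 1 := by
    rw [abs_div, abs_neg, abs_of_pos (by positivity : (0 : ℝ) < 2 * s),
      div_lt_one (by positivity)]
    simp only [s]
    linarith [sqrt_nonneg (p ^ 2 - q ^ 2)]
  -- `s` is the larger root of `4 s² - 4 p s + q² = 0`, which makes the factorization exact.
  have hfactor : ∀ θ, p + q * cos θ = s * (1 - 2 * k * cos θ + k ^ 2) := by
    intro θ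
    have hroot : 4 * s ^ 2 - 4 * p * s + q ^ 2 = 0 := by simp only [s]; nlinarith
    simp only [k]
    field_simp
    linear_combination (-1) * hroot
  simp_rw [hfactor, log_mul hs.ne' (one_sub_two_mul_cos_add_sq_pos hk _).ne']
  rw [intervalIntegral.integral_add intervalIntegrable_const
    ((continuous_log_one_sub_two_mul_cos_add_sq hk).intervalIntegrable _ _),
    integral_log_one_sub_two_mul_cos_add_sq hk]
  simp

lemma bijOn_affine_Ioo_neg_one_one {a b : ℝ} (hab : a < b) :
    BijOn (fun y => (a + b) / 2 - (b - a) / 2 * y) (Ioo (-1) 1) (Ioo a b) := by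
  have h : 0 < b - a := sub_pos.2 hab
  refine InvOn.bijOn (f' := fun x => (a + b - 2 * x) / (b - a)) ⟨fun x _ => ?_, fun x _ => ?_⟩
    (fun y hy => ?_) (fun x hx => ?_)
  · field_simp; ring
  · field_simp; ring
  · constructor <;> nlinarith [hy.1, hy.2]
  · constructor
    · rw [lt_div_iff₀ h]; linarith [hx.2]
    · rw [div_lt_one h]; linarith [hx.1]

lemma sqrt_sub_mul_sub_affine_cos {a b : ℝ} (hab : a ≤ b) {θ : ℝ} (hθ : θ ∈ Icc 0 π) :
    √((b - ((a + b) / 2 - (b - a) / 2 * cos θ)) * ((a + b) / 2 - (b - a) / 2 * cos θ - a))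
      = (b - a) / 2 * sin θ := by
  have hsin : 0 ≤ sin θ := sin_nonneg_of_nonneg_of_le_pi hθ.1 hθ.2
  rw [← sqrt_sq (by nlinarith : 0 ≤ (b - a) / 2 * sin θ)]
  congr 1
  linear_combination (-((b - a) / 2) ^ 2) * sin_sq_add_cos_sq θ

lemma integral_div_sqrt_sub_mul_sub {a b : ℝ} (hab : a < b) (g : ℝ → ℝ) :
    ∫ x in a..b, g x / √((b - x) * (x - a))
      = ∫ θ in 0..π, g ((a + b) / 2 - (b - a) / 2 * cos θ) := by
  set c := fun θ => (a + b) / 2 - (b - a) / 2 * cos θ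
  have hbij : BijOn c (Ioo 0 π) (Ioo a b) :=
    (bijOn_affine_Ioo_neg_one_one hab).comp cosPartialHomeomorph.bijOn
  have hderiv : ∀ θ, HasDerivAt c ((b - a) / 2 * sin θ) θ := fun θ => by
    simpa using ((hasDerivAt_cos θ).const_mul ((b - a) / 2)).const_sub ((a + b) / 2)
  rw [intervalIntegral.integral_of_le hab.le, integral_Ioc_eq_integral_Ioo, ← hbij.image_eq,
    integral_image_eq_integral_abs_deriv_smul measurableSet_Ioo
      (fun θ _ => (hderiv θ).hasDerivWithinAt) hbij.injOn,
    intervalIntegral.integral_of_le pi_pos.le, integral_Ioc_eq_integral_Ioo]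
  refine setIntegral_congr_fun measurableSet_Ioo fun θ hθ => ?_
  have hpos : 0 < (b - a) / 2 * sin θ :=
    mul_pos (by linarith) (sin_pos_of_pos_of_lt_pi hθ.1 hθ.2)
  rw [smul_eq_mul, sqrt_sub_mul_sub_affine_cos hab.le (Ioo_subset_Icc_self hθ), abs_of_pos hpos]
  exact mul_div_cancel₀ _ hpos.ne'

lemma bijOn_mul_div_Ioo {a b : ℝ} (ha : 0 < a) :
    BijOn (fun x => a * b / x) (Ioo a b) (Ioo a b) := by
  have hmaps : MapsTo (fun x => a * b / x) (Ioo a b) (Ioo a b) := fun x hx => by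
    have hx0 : 0 < x := ha.trans hx.1
    constructor
    · rw [lt_div_iff₀ hx0]; nlinarith [hx.2]
    · rw [div_lt_iff₀ hx0]; nlinarith [mul_lt_mul_of_pos_right hx.1 (hx0.trans hx.2)]
  have hinv : LeftInvOn (fun x => a * b / x) (fun x => a * b / x) (Ioo a b) := fun x hx =>
    div_div_cancel₀ (mul_pos ha (ha.trans (hx.1.trans hx.2))).ne'
  exact InvOn.bijOn ⟨hinv, hinv⟩ hmaps hmaps

lemma integral_comp_mul_div {a b : ℝ} (ha : 0 < a) (hab : a ≤ b) (g : ℝ → ℝ) :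
    ∫ x in a..b, g x = ∫ x in a..b, a * b / x ^ 2 * g (a * b / x) := by
  have hbij := bijOn_mul_div_Ioo (b := b) ha
  have hderiv : ∀ x ∈ Ioo a b,
      HasDerivWithinAt (fun x => a * b / x) (-(a * b) / x ^ 2) (Ioo a b) x := fun x hx => by
      simpa [div_eq_mul_inv] using
        ((hasDerivAt_inv (ha.trans hx.1).ne').const_mul (a * b)).hasDerivWithinAt
  simp_rw [intervalIntegral.integral_of_le hab, integral_Ioc_eq_integral_Ioo]
  rw [← hbij.image_eq,
    integral_image_eq_integral_abs_deriv_smul measurableSet_Ioo hderiv hbij.injOn, hbij.image_eq]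
  refine setIntegral_congr_fun measurableSet_Ioo fun x hx => ?_
  rw [smul_eq_mul, abs_div, abs_neg, abs_of_pos (mul_pos ha (ha.trans (hx.1.trans hx.2))),
    abs_of_pos (pow_pos (ha.trans hx.1) 2)]

lemma sqrt_sub_mul_sub_comp_mul_div {a b x : ℝ} (hab : 0 ≤ a * b) (hx : 0 < x) :
    √((b - a * b / x) * (a * b / x - a)) = √(a * b) * √((b - x) * (x - a)) / x := by
  rw [show (b - a * b / x) * (a * b / x - a) = a * b * ((b - x) * (x - a)) / x ^ 2 by
      field_simp,
    sqrt_div' _ (sq_nonneg x), sqrt_mul hab, sqrt_sq hx.le]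

lemma integral_div_mul_sqrt_sub_mul_sub {a b : ℝ} (ha : 0 < a) (hab : a ≤ b) (g : ℝ → ℝ) :
    ∫ x in a..b, g x / (x * √((b - x) * (x - a)))
      = (√(a * b))⁻¹ * ∫ x in a..b, g (a * b / x) / √((b - x) * (x - a)) := by
  have hb : 0 < b := ha.trans_le hab
  have hab0 : 0 < a * b := mul_pos ha hb
  rw [integral_comp_mul_div ha hab, ← intervalIntegral.integral_const_mul]
  refine intervalIntegral.integral_congr fun x hx => ?_
  have hx0 : 0 < x := ha.trans_le (uIcc_of_le hab ▸ hx).1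
  rw [sqrt_sub_mul_sub_comp_mul_div hab0.le hx0]
  field_simp

lemma integral_log_affine_cos {a b : ℝ} (ha : 0 < a) (hab : a ≤ b) :
    ∫ θ in 0..π, log ((a + b) / 2 - (b - a) / 2 * cos θ)
      = 2 * π * log ((√a + √b) / 2) := by
  have hq : |-((b - a) / 2)| < (a + b) / 2 := by
    rw [abs_neg, abs_of_nonneg (by linarith)]; linarith
  have hroot : ((a + b) / 2 + √(((a + b) / 2) ^ 2 - (-((b - a) / 2)) ^ 2)) / 2
      = ((√a + √b) / 2) ^ 2 := by
    rw [show ((a + b) / 2) ^ 2 - (-((b - a) / 2)) ^ 2 = a * b by ring, sqrt_mul ha.le]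
    nlinarith [sq_sqrt ha.le, sq_sqrt (ha.le.trans hab)]
  simp_rw [sub_eq_add_neg _ ((b - a) / 2 * _), ← neg_mul]
  rw [integral_log_add_mul_cos hq, hroot, log_pow]
  push_cast
  ring

theorem integral_log_div_x_sqrt (a b : ℝ) (ha : 0 < a) (hab : a < b) :
    ∫ x in a..b, Real.log x / (x * Real.sqrt ((b - x) * (x - a)))
      = (2 * Real.pi / Real.sqrt (a * b)) *
          Real.log (2 * Real.sqrt (a * b) / (Real.sqrt a + Real.sqrt b)) := by
  have hab0 : 0 < a * b := mul_pos ha (ha.trans hab)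
  have hsum : 0 < (√a + √b) / 2 := by have := sqrt_pos.2 ha; positivity
  have hc : ∀ θ, 0 < (a + b) / 2 - (b - a) / 2 * cos θ := fun θ => by
    nlinarith [cos_le_one θ]
  rw [integral_div_mul_sqrt_sub_mul_sub ha hab.le, integral_div_sqrt_sub_mul_sub hab]
  simp_rw [log_div hab0.ne' (hc _).ne']
  have hlog_int :
      IntervalIntegrable (fun θ => log ((a + b) / 2 - (b - a) / 2 * cos θ)) volume 0 π :=
    ((by fun_prop : Continuous fun θ => (a + b) / 2 - (b - a) / 2 * cos θ).log
      fun θ => (hc θ).ne').intervalIntegrable _ _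
  rw [intervalIntegral.integral_sub intervalIntegrable_const hlog_int,
    integral_log_affine_cos ha hab.le, intervalIntegral.integral_const,
    show 2 * √(a * b) / (√a + √b) = √(a * b) / ((√a + √b) / 2) by
      rw [div_div_eq_mul_div]; ring,
    log_div (sqrt_pos.2 hab0).ne' hsum.ne', log_sqrt hab0.le]
  simp only [sub_zero, smul_eq_mul]
  ring
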